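/- Let K ≥ 1 and let E ⊆ [n]×[m] be a set of allowed advertiser–position pairs such that p_ij > 1/K for every (i,j) ∈ E. Then max over matchings x supported on E with at most K matched pairs of Welfare^base(x) is at least max over all matchings x supported on E of Welfare(x), where Welfare uses the permutation ranking allocated positions in decreasing order of matched value. -/

import Mathlib

open Finset

/-- `x` is a matching supported on the allowed edge set `E`: a 0/1 matrix vanishing
outside `E` with at most one 1 per row and per column. -/
def MatchingOn {n m : ℕ} (E : Finset (Fin n × Fin m)) (x : Fin n → Fin m → ℝ) : Prop :=
  (∀ i j, x i j = 0 ∨ x i j = 1) ∧ (∀ i j, (i, j) ∉ E → x i j = 0) ∧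
    (∀ i, ∑ j, x i j ≤ 1) ∧ (∀ j, ∑ i, x i j ≤ 1)

/-- Cascade-model click-through rate of advertiser `i` under allocation `x`, with the
allocated positions ranked in decreasing order of matched value (ties broken by
advertiser index); since values are sorted this discounts by all earlier advertisers. -/
noncomputable def piCascade {n m : ℕ} (p : Fin n → Fin m → ℝ)
    (x : Fin n → Fin m → ℝ) (i : Fin n) : ℝ :=
  (∑ j, x i j * p i j) * ∏ i' ∈ Finset.Iio i, (1 - ∑ j', x i' j' * p i' j')


lemma tele_prod {n : ℕ} (q : Fin n → ℝ) (t : ℕ) :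
    ∑ i ∈ univ.filter (fun i : Fin n => i.val < t), q i * ∏ i' ∈ Finset.Iio i, (1 - q i')
      = 1 - ∏ i ∈ univ.filter (fun i : Fin n => i.val < t), (1 - q i) := by
  induction t with
  | zero => simp
  | succ t ih =>
    by_cases ht : t < n
    · have hset : (univ.filter (fun i : Fin n => i.val < t + 1))
          = insert ⟨t, ht⟩ (univ.filter (fun i : Fin n => i.val < t)) := by
        ext i; simp [Fin.ext_iff]; omega
      have hnot : (⟨t, ht⟩ : Fin n) ∉ univ.filter (fun i : Fin n => i.val < t) := by simp
      have hIio : Finset.Iio (⟨t, ht⟩ : Fin n) = univ.filter (fun i : Fin n => i.val < t) := by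
        ext i; simp [Finset.mem_Iio, Fin.lt_def]
      rw [hset, Finset.sum_insert hnot, Finset.prod_insert hnot, ih, hIio]
      ring
    · have hset : (univ.filter (fun i : Fin n => i.val < t + 1))
          = univ.filter (fun i : Fin n => i.val < t) := by
        ext i; simp only [mem_filter, mem_univ, true_and]
        constructor <;> intro h <;> omega
      rw [hset, ih]

lemma abel_le {n : ℕ} (v a b : Fin n → ℝ) (hv0 : ∀ i, 0 ≤ v i)
    (hmono : ∀ i i' : Fin n, i ≤ i' → v i' ≤ v i)
    (h : ∀ k : Fin n, ∑ i ∈ Finset.Iic k, a i ≤ ∑ i ∈ Finset.Iic k, b i) :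
    ∑ i, v i * a i ≤ ∑ i, v i * b i := by
  have key : 0 ≤ ∑ i, v i * (b i - a i) := by
    set c : Fin n → ℝ := fun i => b i - a i with hc
    set g : ℕ → ℝ := fun t => if h : t < n then v ⟨t, h⟩ else 0 with hg
    set d : Fin n → ℝ := fun k => g k.val - g (k.val + 1) with hd
    have hd0 : ∀ k, 0 ≤ d k := by
      intro k
      simp only [hd, hg, k.isLt, dif_pos]
      by_cases hk : k.val + 1 < n
      · rw [dif_pos hk]
        have := hmono k ⟨k.val + 1, hk⟩ (by simp [Fin.le_def])
        linarith
      · rw [dif_neg hk]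
        simpa using hv0 k
    have hvd : ∀ i : Fin n, v i = ∑ k ∈ Finset.Ici i, d k := by
      intro i
      have hmap : (Finset.Ici i).map Fin.valEmbedding = Finset.Ico i.val n := by
        rw [Fin.map_valEmbedding_Ici]
      have : ∑ k ∈ Finset.Ici i, d k = ∑ t ∈ Finset.Ico i.val n, (g t - g (t + 1)) := by
        rw [← hmap, Finset.sum_map]
        rfl
      rw [this, Finset.sum_Ico_eq_sub _ (le_of_lt i.isLt), Finset.sum_range_sub',
        Finset.sum_range_sub']
      simp [hg, i.isLt]
    calc (0:ℝ) ≤ ∑ k, d k * ∑ i ∈ Finset.Iic k, c i := by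
          apply Finset.sum_nonneg
          intro k _
          have := h k
          have hck : 0 ≤ ∑ i ∈ Finset.Iic k, c i := by
            simp only [hc, Finset.sum_sub_distrib]
            linarith
          exact mul_nonneg (hd0 k) hck
      _ = ∑ k, ∑ i, (if i ≤ k then d k * c i else 0) := by
          refine Finset.sum_congr rfl fun k _ => ?_
          rw [Finset.mul_sum, ← Finset.sum_filter]
          congr 1
          ext i; simp [Finset.mem_Iic]
      _ = ∑ i, ∑ k, (if i ≤ k then d k * c i else 0) := Finset.sum_comm
      _ = ∑ i, v i * c i := by
          refine Finset.sum_congr rfl fun i _ => ?_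
          have h1 : Finset.Ici i = univ.filter (fun k => i ≤ k) := by
            ext k; simp [Finset.mem_Ici]
          rw [hvd i, h1, Finset.sum_filter, Finset.sum_mul]
          simp only [ite_mul, zero_mul]
  have := Finset.sum_sub_distrib (s := (univ : Finset (Fin n)))
    (f := fun i => v i * b i) (g := fun i => v i * a i)
  have expand : ∑ i, v i * (b i - a i) = ∑ i, v i * b i - ∑ i, v i * a i := by
    rw [← this]; exact Finset.sum_congr rfl fun i _ => by ring
  linarith [expand ▸ key]

/-- if every allowed pair `(i,j) ∈ E` has `p_ij > 1/K`, then the maximal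
base welfare over matchings supported on `E` with at most `K` matched pairs is at least
the maximal cascade welfare over all matchings supported on `E`: for every matching
`x'` on `E` there is a matching `x` on `E` with at most `K` pairs whose base welfare is
at least the cascade welfare of `x'`. -/
theorem stmt_16 {n m : ℕ} (K : ℕ) (hK : 1 ≤ K)
    (p : Fin n → Fin m → ℝ) (hp : ∀ i j, p i j ∈ Set.Icc (0 : ℝ) 1)
    (v : Fin n → ℝ) (hv0 : ∀ i, 0 ≤ v i) (hvmono : ∀ i i' : Fin n, i ≤ i' → v i' ≤ v i)
    (E : Finset (Fin n × Fin m))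
    (hE : ∀ e ∈ E, 1 / (K : ℝ) < p e.1 e.2) :
    ∀ x', MatchingOn E x' →
      ∃ x, MatchingOn E x ∧ (∑ i, ∑ j, x i j) ≤ (K : ℝ) ∧
        ∑ i, v i * piCascade p x' i ≤ ∑ i, v i * ∑ j, x i j * p i j := by
  classical
  rintro x' ⟨h01, hE0, hrow, hcol⟩
  -- the set of matched rows
  set S : Finset (Fin n) := univ.filter (fun i => ∃ j, x' i j ≠ 0) with hS
  -- the first K matched rows
  set T : Finset (Fin n) := S.filter (fun i => (S.filter (· < i)).card < K) with hT
  have hTS : T ⊆ S := filter_subset _ _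
  -- the truncated matching
  set x : Fin n → Fin m → ℝ := fun i j => if i ∈ T then x' i j else 0 with hx
  -- q i : probability row i is clicked (base)
  set q : Fin n → ℝ := fun i => ∑ j, x' i j * p i j with hq
  have hx'nonneg : ∀ i j, 0 ≤ x' i j := by
    intro i j; rcases h01 i j with h | h <;> rw [h] <;> norm_num
  have hq0 : ∀ i, 0 ≤ q i := fun i =>
    Finset.sum_nonneg fun j _ => mul_nonneg (hx'nonneg i j) (hp i j).1
  have hq1 : ∀ i, q i ≤ 1 := by
    intro i
    calc q i ≤ ∑ j, x' i j :=
          Finset.sum_le_sum fun j _ => by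
            calc x' i j * p i j ≤ x' i j * 1 :=
                  mul_le_mul_of_nonneg_left (hp i j).2 (hx'nonneg i j)
              _ = x' i j := mul_one _
      _ ≤ 1 := hrow i
  -- rows not matched have q = 0
  have hqS : ∀ i, i ∉ S → q i = 0 := by
    intro i hi
    have : ∀ j, x' i j = 0 := by
      intro j
      by_contra hne
      exact hi (by simp [hS]; exact ⟨j, hne⟩)
    simp [hq, this]
  -- matched rows have q > 1/K
  have hqK : ∀ i ∈ S, 1 / (K : ℝ) < q i := by
    intro i hi
    simp only [hS, mem_filter, mem_univ, true_and] at hi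
    obtain ⟨j, hj⟩ := hi
    have hj1 : x' i j = 1 := (h01 i j).resolve_left hj
    have hjE : (i, j) ∈ E := by
      by_contra hcon; exact hj (hE0 i j hcon)
    have hpj : 1 / (K : ℝ) < p i j := hE (i, j) hjE
    have : p i j ≤ q i := by
      have h := Finset.single_le_sum (f := fun j' => x' i j' * p i j')
        (fun j' _ => mul_nonneg (hx'nonneg i j') (hp i j').1) (mem_univ j)
      simpa [hq, hj1] using h
    linarith
  -- b i : base click probability under x
  have hbq : ∀ i, (∑ j, x i j * p i j) = if i ∈ T then q i else 0 := by
    intro i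
    by_cases hi : i ∈ T <;> simp [hx, hi, hq]
  -- T has at most K elements
  have hTcard : T.card ≤ K := by
    have : T.card ≤ (Finset.range K).card := by
      apply Finset.card_le_card_of_injOn (fun i => (S.filter (· < i)).card)
      · intro i hi
        simp only [hT, Finset.mem_coe, mem_filter] at hi
        exact Finset.mem_range.2 hi.2
      · intro i hi i' hi' hfe
        have hiT : i ∈ T := Finset.mem_coe.1 hi
        have hi'T : i' ∈ T := Finset.mem_coe.1 hi'
        by_contra hne
        have hss : ∀ a b : Fin n, a ∈ S → a < b →
            (S.filter (· < a)).card < (S.filter (· < b)).card := by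
          intro a b ha hab
          apply Finset.card_lt_card
          constructor
          · intro z hz
            simp only [mem_filter] at hz ⊢
            exact ⟨hz.1, lt_trans hz.2 hab⟩
          · intro hsub
            have haa : a ∈ S.filter (· < b) := by
              simp only [mem_filter]; exact ⟨ha, hab⟩
            have := hsub haa
            simp only [mem_filter] at this
            exact lt_irrefl a this.2
        rcases lt_or_gt_of_ne hne with hlt | hlt
        · exact absurd hfe (ne_of_lt (hss i i' (hTS hiT) hlt))
        · exact absurd hfe (ne_of_gt (hss i' i (hTS hi'T) hlt))
    simpa using this
  refine ⟨x, ⟨?_, ?_, ?_, ?_⟩, ?_, ?_⟩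
  · intro i j
    by_cases hi : i ∈ T
    · simpa [hx, hi] using h01 i j
    · simp [hx, hi]
  · intro i j hij
    by_cases hi : i ∈ T <;> simp [hx, hi, hE0 i j hij]
  · intro i
    by_cases hi : i ∈ T
    · simpa [hx, hi] using hrow i
    · simp [hx, hi]
  · intro j
    calc ∑ i, x i j ≤ ∑ i, x' i j :=
          Finset.sum_le_sum fun i _ => by
            by_cases hi : i ∈ T
            · simp only [hx, if_pos hi]; exact le_refl _
            · simp only [hx, if_neg hi]; exact hx'nonneg i j
      _ ≤ 1 := hcol j
  · -- at most K pairs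
    calc ∑ i, ∑ j, x i j = ∑ i, if i ∈ T then (∑ j, x' i j) else 0 := by
          refine Finset.sum_congr rfl fun i _ => ?_
          by_cases hi : i ∈ T <;> simp [hx, hi]
      _ ≤ ∑ i, if i ∈ T then (1:ℝ) else 0 := by
          refine Finset.sum_le_sum fun i _ => ?_
          by_cases hi : i ∈ T
          · simpa [hi] using hrow i
          · simp [hi]
      _ = T.card := by rw [Finset.sum_ite_mem]; simp
      _ ≤ K := by exact_mod_cast hTcard
  · -- welfare comparison via Abel summation
    have main : ∀ k : Fin n,
        ∑ i ∈ Finset.Iic k, q i * ∏ i' ∈ Finset.Iio i, (1 - q i')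
          ≤ ∑ i ∈ Finset.Iic k, (if i ∈ T then q i else 0) := by
      intro k
      have hIic : Finset.Iic k = univ.filter (fun i : Fin n => i.val < k.val + 1) := by
        ext i
        simp only [Finset.mem_Iic, mem_filter, mem_univ, true_and, Fin.le_def]
        omega
      set S' : Finset (Fin n) := S.filter (· ≤ k) with hS'
      by_cases hc : S'.card ≤ K
      · -- all matched rows up to k are kept
        have hkeep : ∀ i, i ≤ k → i ∈ S → i ∈ T := by
          intro i hik hiS
          simp only [hT, mem_filter]
          refine ⟨hiS, ?_⟩
          have hsub : S.filter (· < i) ⊆ S'.erase i := by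
            intro z hz
            simp only [mem_filter] at hz
            simp only [Finset.mem_erase, hS', mem_filter]
            exact ⟨ne_of_lt hz.2, hz.1, le_of_lt (lt_of_lt_of_le hz.2 hik)⟩
          have h1 : (S.filter (· < i)).card ≤ (S'.erase i).card := Finset.card_le_card hsub
          have h2 : i ∈ S' := by simp [hS', mem_filter, hiS, hik]
          have h3 : (S'.erase i).card = S'.card - 1 := Finset.card_erase_of_mem h2
          have h4 : 1 ≤ S'.card := Finset.card_pos.2 ⟨i, h2⟩
          omega
        calc ∑ i ∈ Finset.Iic k, q i * ∏ i' ∈ Finset.Iio i, (1 - q i')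
            ≤ ∑ i ∈ Finset.Iic k, q i := by
              refine Finset.sum_le_sum fun i _ => ?_
              have hprod1 : ∏ i' ∈ Finset.Iio i, (1 - q i') ≤ 1 :=
                Finset.prod_le_one (fun i' _ => by linarith [hq1 i'])
                  (fun i' _ => by linarith [hq0 i'])
              calc q i * ∏ i' ∈ Finset.Iio i, (1 - q i') ≤ q i * 1 :=
                    mul_le_mul_of_nonneg_left hprod1 (hq0 i)
                _ = q i := mul_one _
          _ ≤ ∑ i ∈ Finset.Iic k, (if i ∈ T then q i else 0) := by
              refine Finset.sum_le_sum fun i hi => ?_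
              rw [Finset.mem_Iic] at hi
              by_cases hiS : i ∈ S
              · rw [if_pos (hkeep i hi hiS)]
              · rw [hqS i hiS]
                by_cases hiT : i ∈ T <;> simp [hiT, hqS i hiS]
      · -- more than K matched rows up to k : kept rows contribute at least 1
        push_neg at hc
        -- T ∩ Iic k has at least K elements
        set T' : Finset (Fin n) := T.filter (· ≤ k) with hT'
        have hT'card : K ≤ T'.card := by
          by_contra hcon
          push_neg at hcon
          have hT'S' : T' ⊆ S' := by
            intro z hz
            simp only [hT', mem_filter] at hz
            simp only [hS', mem_filter]
            exact ⟨hTS hz.1, hz.2⟩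
          have hU : (S' \ T').Nonempty := by
            rw [← Finset.card_pos, Finset.card_sdiff_of_subset hT'S']
            omega
          obtain ⟨i0, hi0U, hi0min⟩ := Finset.exists_min_image (S' \ T') id hU
          have hi0S' : i0 ∈ S' := (Finset.mem_sdiff.1 hi0U).1
          have hi0nT' : i0 ∉ T' := (Finset.mem_sdiff.1 hi0U).2
          have hi0S : i0 ∈ S := (mem_filter.1 hi0S').1
          have hi0k : i0 ≤ k := (mem_filter.1 hi0S').2
          have hi0nT : i0 ∉ T := fun h =>
            hi0nT' (by simp only [hT', mem_filter]; exact ⟨h, hi0k⟩)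
          have hfK : K ≤ (S.filter (· < i0)).card := by
            by_contra h
            push_neg at h
            exact hi0nT (by simp only [hT, mem_filter]; exact ⟨hi0S, h⟩)
          have hsub : S.filter (· < i0) ⊆ T' := by
            intro z hz
            simp only [mem_filter] at hz
            have hzk : z ≤ k := le_of_lt (lt_of_lt_of_le hz.2 hi0k)
            have hzS' : z ∈ S' := by
              simp only [hS', mem_filter]; exact ⟨hz.1, hzk⟩
            by_contra hzT'
            have hzU : z ∈ S' \ T' := Finset.mem_sdiff.2 ⟨hzS', hzT'⟩
            have := hi0min z hzU
            simp only [id] at this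
            exact absurd hz.2 (not_lt.2 this)
          have := Finset.card_le_card hsub
          omega
        have hKne : (K : ℝ) ≠ 0 := Nat.cast_ne_zero.2 (by omega)
        have hL : ∑ i ∈ Finset.Iic k, q i * ∏ i' ∈ Finset.Iio i, (1 - q i') ≤ 1 := by
          rw [hIic, tele_prod q (k.val + 1)]
          have : (0:ℝ) ≤ ∏ i ∈ univ.filter (fun i : Fin n => i.val < k.val + 1), (1 - q i) :=
            Finset.prod_nonneg fun i _ => by linarith [hq1 i]
          linarith
        have hR : (1:ℝ) ≤ ∑ i ∈ Finset.Iic k, (if i ∈ T then q i else 0) := by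
          have heq : ∑ i ∈ Finset.Iic k, (if i ∈ T then q i else 0) = ∑ i ∈ T', q i := by
            rw [← Finset.sum_filter]
            apply Finset.sum_congr _ (fun _ _ => rfl)
            ext z
            simp only [mem_filter, Finset.mem_Iic, hT']
            tauto
          rw [heq]
          have h1K : ∀ i ∈ T', 1 / (K:ℝ) ≤ q i := fun i hi =>
            le_of_lt (hqK i (hTS (mem_filter.1 hi).1))
          calc (1:ℝ) = K * (1 / K) := by field_simp
            _ ≤ T'.card * (1 / K) := by
                apply mul_le_mul_of_nonneg_right _ (by positivity)
                exact_mod_cast hT'card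
            _ = ∑ _i ∈ T', 1/(K:ℝ) := by rw [Finset.sum_const, nsmul_eq_mul]
            _ ≤ ∑ i ∈ T', q i := Finset.sum_le_sum h1K
        linarith
    have habel := abel_le v (fun i => q i * ∏ i' ∈ Finset.Iio i, (1 - q i'))
      (fun i => if i ∈ T then q i else 0) hv0 hvmono main
    calc ∑ i, v i * piCascade p x' i
        = ∑ i, v i * (q i * ∏ i' ∈ Finset.Iio i, (1 - q i')) := rfl
      _ ≤ ∑ i, v i * (if i ∈ T then q i else 0) := habel
      _ = ∑ i, v i * ∑ j, x i j * p i j := by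
          refine Finset.sum_congr rfl fun i _ => ?_
          rw [hbq i]
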